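/- arXiv:2512.23405 — 3 statements merged into one kernel-verified Lean document; each statement's English description precedes it below -/
import Mathlib

section
/- Let (Ω, 𝔽, ℙ) be a probability space carrying a random vector x : Ω → ℝ^n, a random matrix F : Ω → ℝ^{m×n}, and a random vector ε : Ω → ℝ^m, mutually independent, all with finite second moments, and with E[ε] = 0. Set y = F x + ε and a = vec(F) (row-wise vectorization). Then the cross-covariance matrix of a and y satisfies C_ay = C_aa (I_m ⊗ θ_xᵀ)ᵀ, where C_aa is the covariance matrix of a and θ_x = E[x]. -/
open Matrix MeasureTheory ProbabilityTheory
open scoped Kronecker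

/-!
Centering `a p` kills every constant in `y j`, and by independence the noise contributes only
`E[a p - θa p] * E[ε j] = 0`. Writing `y j = ∑ l, F j l * x l + ε j`, independence of `F` and
`x` factors `E[(a p - θa p) * F j l * x l]` as `E[(a p - θa p) * (F j l - θa (j, l))] * θx l`,
which is `Caa p (j, l) * θx l`; and `∑ l, Caa p (j, l) * θx l` is exactly the entry `(p, j)` of
`Caa * (I ⊗ θxᵀ)ᵀ`.
-/

theorem mul_transpose_kronecker_replicateRow_apply {R ι m n : Type*} [CommSemiring R]
    [Fintype m] [DecidableEq m] [Fintype n] (C : Matrix ι (m × n) R) (θ : n → R) (p : ι) (j : m) :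
    (C * (reindex (Equiv.prodPUnit m) (Equiv.refl (m × n))
      ((1 : Matrix m m R) ⊗ₖ replicateRow Unit θ))ᵀ) p j = ∑ l, C p (j, l) * θ l := by
  simp [mul_apply, Fintype.sum_prod_type, one_apply]

section

variable {Ω : Type*} [MeasurableSpace Ω] {μ : Measure Ω}

theorem integral_mul_sub_const_of_integral_eq_zero {u v : Ω → ℝ} (hu : Integrable u μ)
    (hu0 : ∫ ω, u ω ∂μ = 0) (huv : Integrable (fun ω => u ω * v ω) μ) (c : ℝ) :
    ∫ ω, u ω * (v ω - c) ∂μ = ∫ ω, u ω * v ω ∂μ := by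
  simp_rw [mul_sub]
  rw [integral_sub huv (hu.mul_const c), integral_mul_const, hu0, zero_mul, sub_zero]

namespace ProbabilityTheory.IndepFun

variable {κ : Type*} {w x : Ω → κ → ℝ}

theorem eval (hwx : IndepFun w x μ) (k l : κ) :
    IndepFun (fun ω => w ω k) (fun ω => x ω l) μ :=
  hwx.comp (measurable_pi_apply k) (measurable_pi_apply l)

variable [Fintype κ]

theorem integrable_dotProduct (hwx : IndepFun w x μ)
    (hw : ∀ l, Integrable (fun ω => w ω l) μ) (hx : ∀ l, Integrable (fun ω => x ω l) μ) :
    Integrable (fun ω => w ω ⬝ᵥ x ω) μ :=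
  integrable_finsetSum _ fun l _ => (hwx.eval l l).integrable_mul (hw l) (hx l)

theorem integral_dotProduct (hwx : IndepFun w x μ)
    (hw : ∀ l, Integrable (fun ω => w ω l) μ) (hx : ∀ l, Integrable (fun ω => x ω l) μ) :
    ∫ ω, w ω ⬝ᵥ x ω ∂μ = (fun l => ∫ ω, w ω l ∂μ) ⬝ᵥ fun l => ∫ ω, x ω l ∂μ := calc
  _ = ∑ l, ∫ ω, w ω l * x ω l ∂μ :=
    integral_finsetSum _ fun l _ => (hwx.eval l l).integrable_mul (hw l) (hx l)
  _ = _ := Finset.sum_congr rfl fun l _ => (hwx.eval l l).integral_fun_mul_eq_mul_integral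
    (hw l).aestronglyMeasurable (hx l).aestronglyMeasurable

end ProbabilityTheory.IndepFun

theorem integral_mul_dotProduct_add_sub_const {κ : Type*} [Fintype κ] {u e : Ω → ℝ}
    {r x : Ω → κ → ℝ} (hu : Integrable u μ) (hu0 : ∫ ω, u ω ∂μ = 0)
    (hur : ∀ l, Integrable (fun ω => u ω * r ω l) μ) (hx : ∀ l, Integrable (fun ω => x ω l) μ)
    (he : Integrable e μ) (hurx : IndepFun (fun ω => u ω • r ω) x μ) (hue : IndepFun u e μ)
    (c : ℝ) :
    ∫ ω, u ω * (r ω ⬝ᵥ x ω + e ω - c) ∂μ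
      = (fun l => ∫ ω, u ω * r ω l ∂μ) ⬝ᵥ fun l => ∫ ω, x ω l ∂μ := by
  have hexpand : (fun ω => u ω * (r ω ⬝ᵥ x ω + e ω))
      = fun ω => (u ω • r ω) ⬝ᵥ x ω + u ω * e ω := by
    funext ω
    rw [mul_add, smul_dotProduct, smul_eq_mul]
  have hurx1 := hurx.integrable_dotProduct hur hx
  have hue1 : Integrable (fun ω => u ω * e ω) μ := hue.integrable_mul hu he
  rw [integral_mul_sub_const_of_integral_eq_zero hu hu0 (hexpand ▸ hurx1.add hue1), hexpand,
    integral_add hurx1 hue1, hurx.integral_dotProduct hur hx,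
    hue.integral_fun_mul_eq_mul_integral hu.aestronglyMeasurable he.aestronglyMeasurable,
    hu0, zero_mul, add_zero]
  rfl

end

theorem crossCov_operator_obs_general
    {Ω : Type*} [MeasureSpace Ω] [IsProbabilityMeasure (ℙ : Measure Ω)]
    {n m : ℕ}
    (x : Ω → Fin n → ℝ) (F : Ω → Fin m → Fin n → ℝ) (ε : Ω → Fin m → ℝ)
    (hx2 : ∀ i, MemLp (fun ω => x ω i) 2 ℙ)
    (hF2 : ∀ i j, MemLp (fun ω => F ω i j) 2 ℙ)
    (hε2 : ∀ i, MemLp (fun ω => ε ω i) 2 ℙ)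
    (hindep₁ : IndepFun x F ℙ)
    (hindep₂ : IndepFun (fun ω => (x ω, F ω)) ε ℙ)
    (y : Ω → Fin m → ℝ) (hy : y = fun ω => Matrix.of (F ω) *ᵥ x ω + ε ω)
    (a : Ω → Fin m × Fin n → ℝ) (ha : a = fun ω p => F ω p.1 p.2)
    (θx : Fin n → ℝ) (hθx : θx = fun i => ∫ ω, x ω i)
    (θy : Fin m → ℝ)
    (θa : Fin m × Fin n → ℝ) (hθa : θa = fun p => ∫ ω, a ω p)
    (Cay : Matrix (Fin m × Fin n) (Fin m) ℝ)
    (hCay : Cay = Matrix.of fun p j => ∫ ω, (a ω p - θa p) * (y ω j - θy j))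
    (Caa : Matrix (Fin m × Fin n) (Fin m × Fin n) ℝ)
    (hCaa : Caa = Matrix.of fun p q => ∫ ω, (a ω p - θa p) * (a ω q - θa q))
    (G : Matrix (Fin m) (Fin m × Fin n) ℝ)
    (hG : G = Matrix.reindex (Equiv.prodPUnit (Fin m)) (Equiv.refl (Fin m × Fin n))
      ((1 : Matrix (Fin m) (Fin m) ℝ) ⊗ₖ Matrix.replicateRow Unit θx)) :
    Cay = Caa * Gᵀ := by
  subst hy ha hθx hθa hCay hCaa hG
  ext p j
  rw [of_apply, mul_transpose_kronecker_replicateRow_apply]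
  simp only [of_apply]
  set u : Ω → ℝ := fun ω => F ω p.1 p.2 - ∫ ω', F ω' p.1 p.2
  have hu : MemLp u 2 ℙ := (hF2 p.1 p.2).sub (memLp_const _)
  have hu1 : Integrable u ℙ := hu.integrable one_le_two
  have hu0 : ∫ ω, u ω = 0 := by
    simpa [centralMoment] using centralMoment_one (X := fun ω => F ω p.1 p.2) (μ := ℙ)
  have hux : IndepFun (fun ω => u ω • F ω j) x ℙ :=
    hindep₁.symm.comp (φ := fun M : Fin m → Fin n → ℝ => (M p.1 p.2 - ∫ ω', F ω' p.1 p.2) • M j)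
      (by fun_prop) measurable_id
  have huε : IndepFun u (fun ω => ε ω j) ℙ :=
    hindep₂.comp (φ := fun v : (Fin n → ℝ) × (Fin m → Fin n → ℝ) =>
      v.2 p.1 p.2 - ∫ ω', F ω' p.1 p.2) (by fun_prop) (measurable_pi_apply j)
  have huF : ∀ l, Integrable (fun ω => u ω * F ω j l) ℙ := fun l =>
    hu.integrable_mul (hF2 j l)
  refine (integral_mul_dotProduct_add_sub_const hu1 hu0 huF (fun l => (hx2 l).integrable one_le_two)
    ((hε2 j).integrable one_le_two) hux huε (θy j)).trans ?_
  exact Finset.sum_congr rfl fun l _ => congrArg (· * _)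
    (integral_mul_sub_const_of_integral_eq_zero hu1 hu0 (huF l) _).symm

/-- In the blind model `y = F x + ε` with `x`, `F`, `ε` mutually independent,
square integrable, and `E[ε] = 0`, letting `a = vec(F)` (row-wise vectorization, realized as a
vector indexed by `Fin m × Fin n`), the cross-covariance of `a` and `y` satisfies
`C_ay = C_aa (I_m ⊗ θ_xᵀ)ᵀ`, where `C_aa` is the covariance of `a` and `θ_x = E[x]`. -/
theorem crossCov_operator_obs
    {Ω : Type*} [MeasureSpace Ω] [IsProbabilityMeasure (ℙ : Measure Ω)]
    {n m : ℕ}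
    (x : Ω → Fin n → ℝ) (F : Ω → Fin m → Fin n → ℝ) (ε : Ω → Fin m → ℝ)
    (hxm : Measurable x) (hFm : Measurable F) (hεm : Measurable ε)
    (hx2 : ∀ i, MemLp (fun ω => x ω i) 2 ℙ)
    (hF2 : ∀ i j, MemLp (fun ω => F ω i j) 2 ℙ)
    (hε2 : ∀ i, MemLp (fun ω => ε ω i) 2 ℙ)
    (hindep₁ : IndepFun x F ℙ)
    (hindep₂ : IndepFun (fun ω => (x ω, F ω)) ε ℙ)
    (hε0 : ∀ i, ∫ ω, ε ω i = 0)
    (y : Ω → Fin m → ℝ) (hy : y = fun ω => Matrix.of (F ω) *ᵥ x ω + ε ω)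
    (a : Ω → Fin m × Fin n → ℝ) (ha : a = fun ω p => F ω p.1 p.2)
    (θx : Fin n → ℝ) (hθx : θx = fun i => ∫ ω, x ω i)
    (θy : Fin m → ℝ) (hθy : θy = fun i => ∫ ω, y ω i)
    (θa : Fin m × Fin n → ℝ) (hθa : θa = fun p => ∫ ω, a ω p)
    (Cay : Matrix (Fin m × Fin n) (Fin m) ℝ)
    (hCay : Cay = Matrix.of fun p j => ∫ ω, (a ω p - θa p) * (y ω j - θy j))
    (Caa : Matrix (Fin m × Fin n) (Fin m × Fin n) ℝ)
    (hCaa : Caa = Matrix.of fun p q => ∫ ω, (a ω p - θa p) * (a ω q - θa q))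
    (G : Matrix (Fin m) (Fin m × Fin n) ℝ)
    (hG : G = Matrix.reindex (Equiv.prodPUnit (Fin m)) (Equiv.refl (Fin m × Fin n))
      ((1 : Matrix (Fin m) (Fin m) ℝ) ⊗ₖ Matrix.replicateRow Unit θx)) :
    Cay = Caa * Gᵀ :=
  crossCov_operator_obs_general x F ε hx2 hF2 hε2 hindep₁ hindep₂ y hy a ha θx hθx θy θa hθa Cay
    hCay Caa hCaa G hG
end

section
/- Let (Ω, 𝔽, ℙ) carry a random vector x : Ω → ℝ^n, a random matrix F : Ω → ℝ^{m×n}, and a random vector ε : Ω → ℝ^m, mutually independent, with finite second moments, and E[ε] = 0. Set y = F x + ε, a = vec(F), Θ_F = E[F], θ_x = E[x]. Let C_{F_i F_j} ∈ ℝ^{n×n} denote the cross-covariance matrix of the i-th and j-th rows of F, and define D ∈ ℝ^{m×m} by D_{ij} = Σ_{k=1}^n Σ_{q=1}^n (C_{F_i F_j} ⊙ C_xx)_{kq}, where ⊙ is the entrywise (Hadamard) product. Then the covariance matrix of y decomposes as C_yy = Θ_F C_xx Θ_Fᵀ + (I_m ⊗ θ_xᵀ) C_aa (I_m ⊗ θ_xᵀ)ᵀ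 + D + C_εε. -/
/-!
Centring gives `y_i - E y_i = ∑_k (F_ik x_k - E[F_ik x_k]) + ε_i`, and the noise is uncorrelated
with the first sum, so `(C_yy)_ij = ∑_{k,q} cov(F_ik x_k, F_jq x_q) + (C_εε)_ij`.
For `(U, U')` independent of `(V, V')` one has
`cov(UV, U'V') = cov(U,U') cov(V,V') + E U E U' cov(V,V') + cov(U,U') E V E V'`;
with `U = F_ik`, `V = x_k`, summed over `k, q`, the three terms are the entries of `D`,
`Θ_F C_xx Θ_Fᵀ` and `(I_m ⊗ θ_xᵀ) C_aa (I_m ⊗ θ_xᵀ)ᵀ`.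
-/

open Matrix MeasureTheory ProbabilityTheory
open scoped Kronecker

namespace ProbabilityTheory

variable {Ω : Type*} {mΩ : MeasurableSpace Ω} {μ : Measure Ω}

lemma IndepFun.memLp_two_mul {X Y : Ω → ℝ} (h : X ⟂ᵢ[μ] Y) (hX : MemLp X 2 μ)
    (hY : MemLp Y 2 μ) : MemLp (X * Y) 2 μ := by
  refine (memLp_two_iff_integrable_sq (hX.1.mul hY.1)).2 ?_
  have hsq : (fun ω => X ω ^ 2) ⟂ᵢ[μ] (fun ω => Y ω ^ 2) :=
    h.comp (measurable_id.pow_const 2) (measurable_id.pow_const 2)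
  exact (hsq.integrable_mul hX.integrable_sq hY.integrable_sq).congr
    (ae_of_all _ fun ω => (mul_pow (X ω) (Y ω) 2).symm)

lemma covariance_mul_mul_of_indepFun [IsProbabilityMeasure μ] {U₁ U₂ V₁ V₂ : Ω → ℝ}
    (h : (fun ω => (U₁ ω, U₂ ω)) ⟂ᵢ[μ] (fun ω => (V₁ ω, V₂ ω)))
    (hU₁ : MemLp U₁ 2 μ) (hU₂ : MemLp U₂ 2 μ) (hV₁ : MemLp V₁ 2 μ) (hV₂ : MemLp V₂ 2 μ) :
    cov[U₁ * V₁, U₂ * V₂; μ] = cov[U₁, U₂; μ] * cov[V₁, V₂; μ]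
      + μ[U₁] * μ[U₂] * cov[V₁, V₂; μ] + cov[U₁, U₂; μ] * μ[V₁] * μ[V₂] := by
  have h₁ : U₁ ⟂ᵢ[μ] V₁ := h.comp measurable_fst measurable_fst
  have h₂ : U₂ ⟂ᵢ[μ] V₂ := h.comp measurable_snd measurable_snd
  have h₁₂ : (U₁ * U₂) ⟂ᵢ[μ] (V₁ * V₂) :=
    h.comp (measurable_fst.mul measurable_snd) (measurable_fst.mul measurable_snd)
  have hswap : U₁ * V₁ * (U₂ * V₂) = U₁ * U₂ * (V₁ * V₂) := by ring
  rw [covariance_eq_sub (h₁.memLp_two_mul hU₁ hV₁) (h₂.memLp_two_mul hU₂ hV₂),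
    covariance_eq_sub hU₁ hU₂, covariance_eq_sub hV₁ hV₂, hswap,
    h₁₂.integral_mul_eq_mul_integral (hU₁.1.mul hU₂.1) (hV₁.1.mul hV₂.1),
    h₁.integral_mul_eq_mul_integral hU₁.1 hV₁.1, h₂.integral_mul_eq_mul_integral hU₂.1 hV₂.1]
  ring

lemma covariance_add_add_of_indepFun [IsFiniteMeasure μ] {X₁ X₂ Z₁ Z₂ : Ω → ℝ}
    (h₁₂ : X₁ ⟂ᵢ[μ] Z₂) (h₂₁ : Z₁ ⟂ᵢ[μ] X₂)
    (hX₁ : MemLp X₁ 2 μ) (hX₂ : MemLp X₂ 2 μ) (hZ₁ : MemLp Z₁ 2 μ) (hZ₂ : MemLp Z₂ 2 μ) :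
    cov[X₁ + Z₁, X₂ + Z₂; μ] = cov[X₁, X₂; μ] + cov[Z₁, Z₂; μ] := by
  rw [covariance_add_left hX₁ hZ₁ (hX₂.add hZ₂), covariance_add_right hX₁ hX₂ hZ₂,
    covariance_add_right hZ₁ hX₂ hZ₂, h₁₂.covariance_eq_zero hX₁ hZ₂,
    h₂₁.covariance_eq_zero hZ₁ hX₂]
  ring

lemma covariance_mulVec_add_of_indepFun [IsProbabilityMeasure μ] {ι κ : Type*} [Fintype ι]
    [Fintype κ] {x : Ω → κ → ℝ} {F : Ω → ι → κ → ℝ} {ε : Ω → ι → ℝ}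
    (hxF : x ⟂ᵢ[μ] F) (hxFε : (fun ω => (x ω, F ω)) ⟂ᵢ[μ] ε)
    (hx : ∀ k, MemLp (fun ω => x ω k) 2 μ) (hF : ∀ i k, MemLp (fun ω => F ω i k) 2 μ)
    (hε : ∀ i, MemLp (fun ω => ε ω i) 2 μ) (i j : ι) :
    cov[fun ω => (of (F ω) *ᵥ x ω + ε ω) i, fun ω => (of (F ω) *ᵥ x ω + ε ω) j; μ]
      = ∑ k, ∑ q,
          (cov[fun ω => F ω i k, fun ω => F ω j q; μ] * cov[fun ω => x ω k, fun ω => x ω q; μ]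
            + μ[fun ω => F ω i k] * μ[fun ω => F ω j q] * cov[fun ω => x ω k, fun ω => x ω q; μ]
            + cov[fun ω => F ω i k, fun ω => F ω j q; μ] * μ[fun ω => x ω k] * μ[fun ω => x ω q])
        + cov[fun ω => ε ω i, fun ω => ε ω j; μ] := by
  have hFx : ∀ i j k q, (fun ω => (F ω i k, F ω j q)) ⟂ᵢ[μ] (fun ω => (x ω k, x ω q)) :=
    fun i j k q => (hxF.comp (φ := fun v => (v k, v q)) (ψ := fun M => (M i k, M j q))
      (by fun_prop) (by fun_prop)).symm
  have hFx2 : ∀ i k, MemLp (fun ω => F ω i k * x ω k) 2 μ := fun i k =>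
    ((hFx i i k k).comp measurable_fst measurable_fst).memLp_two_mul (hF i k) (hx k)
  have hFxε : ∀ i j, (fun ω => ∑ k, F ω i k * x ω k) ⟂ᵢ[μ] (fun ω => ε ω j) := fun i j =>
    hxFε.comp (φ := fun p : (κ → ℝ) × (ι → κ → ℝ) => ∑ k, p.2 i k * p.1 k)
      (by fun_prop) (measurable_pi_apply j)
  change cov[(fun ω => ∑ k, F ω i k * x ω k) + fun ω => ε ω i,
    (fun ω => ∑ q, F ω j q * x ω q) + fun ω => ε ω j; μ] = _
  rw [covariance_add_add_of_indepFun (hFxε i j) (hFxε j i).symm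
      (memLp_finsetSum _ fun k _ => hFx2 i k) (memLp_finsetSum _ fun q _ => hFx2 j q)
      (hε i) (hε j),
    covariance_fun_sum_fun_sum (hFx2 i) (hFx2 j)]
  congr 1
  exact Finset.sum_congr rfl fun k _ => Finset.sum_congr rfl fun q _ =>
    covariance_mul_mul_of_indepFun (hFx i j k q) (hF i k) (hF j q) (hx k) (hx q)

end ProbabilityTheory

namespace Matrix

variable {ι κ R : Type*} [CommSemiring R]

lemma mul_mul_transpose_apply [Fintype ι] [Fintype κ] (A : Matrix ι κ R) (B : Matrix κ κ R)
    (i j : ι) :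
    (A * B * Aᵀ) i j = ∑ k, ∑ q, A i k * B k q * A j q := by
  simp only [mul_apply, transpose_apply, Finset.sum_mul]
  exact Finset.sum_comm

lemma reindex_one_kronecker_replicateRow_apply [DecidableEq ι] (θ : κ → R) (i : ι) (p : ι × κ) :
    reindex (Equiv.prodPUnit ι) (Equiv.refl (ι × κ)) ((1 : Matrix ι ι R) ⊗ₖ replicateRow Unit θ) i p
      = if i = p.1 then θ p.2 else 0 := by
  simp [kroneckerMap_apply, one_apply, ite_mul]

lemma reindex_one_kronecker_replicateRow_mul_mul_transpose_apply [Fintype ι] [Fintype κ]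
    [DecidableEq ι] (θ : κ → R) (M : Matrix (ι × κ) (ι × κ) R) (i j : ι) :
    (reindex (Equiv.prodPUnit ι) (Equiv.refl (ι × κ)) ((1 : Matrix ι ι R) ⊗ₖ replicateRow Unit θ)
        * M * (reindex (Equiv.prodPUnit ι) (Equiv.refl (ι × κ))
          ((1 : Matrix ι ι R) ⊗ₖ replicateRow Unit θ))ᵀ) i j
      = ∑ k, ∑ q, θ k * M (i, k) (j, q) * θ q := by
  rw [mul_mul_transpose_apply]
  simp only [reindex_one_kronecker_replicateRow_apply]
  simp [Fintype.sum_prod_type, ite_mul, mul_ite]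

end Matrix

theorem cov_obs_decomposition_general
    {Ω : Type*} [MeasureSpace Ω] [IsProbabilityMeasure (ℙ : Measure Ω)]
    {n m : ℕ}
    (x : Ω → Fin n → ℝ) (F : Ω → Fin m → Fin n → ℝ) (ε : Ω → Fin m → ℝ)
    (hx2 : ∀ i, MemLp (fun ω => x ω i) 2 ℙ)
    (hF2 : ∀ i j, MemLp (fun ω => F ω i j) 2 ℙ)
    (hε2 : ∀ i, MemLp (fun ω => ε ω i) 2 ℙ)
    (hindep₁ : IndepFun x F ℙ)
    (hindep₂ : IndepFun (fun ω => (x ω, F ω)) ε ℙ)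
    (hε0 : ∀ i, ∫ ω, ε ω i = 0)
    (y : Ω → Fin m → ℝ) (hy : y = fun ω => Matrix.of (F ω) *ᵥ x ω + ε ω)
    (a : Ω → Fin m × Fin n → ℝ) (ha : a = fun ω p => F ω p.1 p.2)
    (θx : Fin n → ℝ) (hθx : θx = fun i => ∫ ω, x ω i)
    (θy : Fin m → ℝ) (hθy : θy = fun i => ∫ ω, y ω i)
    (θa : Fin m × Fin n → ℝ) (hθa : θa = fun p => ∫ ω, a ω p)
    (ΘF : Matrix (Fin m) (Fin n) ℝ) (hΘF : ΘF = Matrix.of fun i j => ∫ ω, F ω i j)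
    (Cxx : Matrix (Fin n) (Fin n) ℝ)
    (hCxx : Cxx = Matrix.of fun i j => ∫ ω, (x ω i - θx i) * (x ω j - θx j))
    (Cyy : Matrix (Fin m) (Fin m) ℝ)
    (hCyy : Cyy = Matrix.of fun i j => ∫ ω, (y ω i - θy i) * (y ω j - θy j))
    (Caa : Matrix (Fin m × Fin n) (Fin m × Fin n) ℝ)
    (hCaa : Caa = Matrix.of fun p q => ∫ ω, (a ω p - θa p) * (a ω q - θa q))
    (Cεε : Matrix (Fin m) (Fin m) ℝ)
    (hCεε : Cεε = Matrix.of fun i j => ∫ ω, ε ω i * ε ω j)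
    (CF : Fin m → Fin m → Matrix (Fin n) (Fin n) ℝ)
    (hCF : CF = fun i j => Matrix.of fun k q =>
      ∫ ω, (F ω i k - ΘF i k) * (F ω j q - ΘF j q))
    (D : Matrix (Fin m) (Fin m) ℝ)
    (hD : D = Matrix.of fun i j => ∑ k, ∑ q, (CF i j ⊙ Cxx) k q)
    (G : Matrix (Fin m) (Fin m × Fin n) ℝ)
    (hG : G = Matrix.reindex (Equiv.prodPUnit (Fin m)) (Equiv.refl (Fin m × Fin n))
      ((1 : Matrix (Fin m) (Fin m) ℝ) ⊗ₖ Matrix.replicateRow Unit θx)) :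
    Cyy = ΘF * Cxx * ΘFᵀ + G * Caa * Gᵀ + D + Cεε := by
  have hCεε' : ∀ i j, Cεε i j = cov[fun ω => ε ω i, fun ω => ε ω j] := fun i j => by
    rw [covariance_eq_sub (hε2 i) (hε2 j), hε0, hε0, hCεε, mul_zero, sub_zero]
    rfl
  ext i j
  rw [Matrix.add_apply, Matrix.add_apply, Matrix.add_apply, mul_mul_transpose_apply, hG,
    reindex_one_kronecker_replicateRow_mul_mul_transpose_apply, hD, hCεε']
  subst hy ha hθx hθy hθa hΘF hCxx hCyy hCaa hCF
  refine (covariance_mulVec_add_of_indepFun hindep₁ hindep₂ hx2 hF2 hε2 i j).trans ?_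
  simp only [of_apply, hadamard_apply, covariance, ← Finset.sum_add_distrib]
  congr 1
  refine Finset.sum_congr rfl fun k _ => Finset.sum_congr rfl fun q _ => ?_
  ring

/-- In the blind model `y = F x + ε` with `x`, `F`, `ε` mutually independent,
square integrable, and `E[ε] = 0`, the covariance of the observation decomposes as
`C_yy = Θ_F C_xx Θ_Fᵀ + (I_m ⊗ θ_xᵀ) C_aa (I_m ⊗ θ_xᵀ)ᵀ + D + C_εε`,
where `a = vec(F)`, `Θ_F = E[F]`, `θ_x = E[x]`, and
`D_{ij} = Σ_k Σ_q (C_{F_i F_j} ⊙ C_xx)_{kq}` with `C_{F_i F_j}` the cross-covariance of the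
`i`-th and `j`-th rows of `F` and `⊙` the Hadamard product. -/
theorem cov_obs_decomposition
    {Ω : Type*} [MeasureSpace Ω] [IsProbabilityMeasure (ℙ : Measure Ω)]
    {n m : ℕ}
    (x : Ω → Fin n → ℝ) (F : Ω → Fin m → Fin n → ℝ) (ε : Ω → Fin m → ℝ)
    (hxm : Measurable x) (hFm : Measurable F) (hεm : Measurable ε)
    (hx2 : ∀ i, MemLp (fun ω => x ω i) 2 ℙ)
    (hF2 : ∀ i j, MemLp (fun ω => F ω i j) 2 ℙ)
    (hε2 : ∀ i, MemLp (fun ω => ε ω i) 2 ℙ)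
    (hindep₁ : IndepFun x F ℙ)
    (hindep₂ : IndepFun (fun ω => (x ω, F ω)) ε ℙ)
    (hε0 : ∀ i, ∫ ω, ε ω i = 0)
    (y : Ω → Fin m → ℝ) (hy : y = fun ω => Matrix.of (F ω) *ᵥ x ω + ε ω)
    (a : Ω → Fin m × Fin n → ℝ) (ha : a = fun ω p => F ω p.1 p.2)
    (θx : Fin n → ℝ) (hθx : θx = fun i => ∫ ω, x ω i)
    (θy : Fin m → ℝ) (hθy : θy = fun i => ∫ ω, y ω i)
    (θa : Fin m × Fin n → ℝ) (hθa : θa = fun p => ∫ ω, a ω p)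
    (ΘF : Matrix (Fin m) (Fin n) ℝ) (hΘF : ΘF = Matrix.of fun i j => ∫ ω, F ω i j)
    (Cxx : Matrix (Fin n) (Fin n) ℝ)
    (hCxx : Cxx = Matrix.of fun i j => ∫ ω, (x ω i - θx i) * (x ω j - θx j))
    (Cyy : Matrix (Fin m) (Fin m) ℝ)
    (hCyy : Cyy = Matrix.of fun i j => ∫ ω, (y ω i - θy i) * (y ω j - θy j))
    (Caa : Matrix (Fin m × Fin n) (Fin m × Fin n) ℝ)
    (hCaa : Caa = Matrix.of fun p q => ∫ ω, (a ω p - θa p) * (a ω q - θa q))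
    (Cεε : Matrix (Fin m) (Fin m) ℝ)
    (hCεε : Cεε = Matrix.of fun i j => ∫ ω, ε ω i * ε ω j)
    (CF : Fin m → Fin m → Matrix (Fin n) (Fin n) ℝ)
    (hCF : CF = fun i j => Matrix.of fun k q =>
      ∫ ω, (F ω i k - ΘF i k) * (F ω j q - ΘF j q))
    (D : Matrix (Fin m) (Fin m) ℝ)
    (hD : D = Matrix.of fun i j => ∑ k, ∑ q, (CF i j ⊙ Cxx) k q)
    (G : Matrix (Fin m) (Fin m × Fin n) ℝ)
    (hG : G = Matrix.reindex (Equiv.prodPUnit (Fin m)) (Equiv.refl (Fin m × Fin n))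
      ((1 : Matrix (Fin m) (Fin m) ℝ) ⊗ₖ Matrix.replicateRow Unit θx)) :
    Cyy = ΘF * Cxx * ΘFᵀ + G * Caa * Gᵀ + D + Cεε :=
  cov_obs_decomposition_general x F ε hx2 hF2 hε2 hindep₁ hindep₂ hε0 y hy a ha θx hθx θy hθy θa hθa
    ΘF hΘF Cxx hCxx Cyy hCyy Caa hCaa Cεε hCεε CF hCF D hD G hG
end

section
/- Let ς be a nonnegative real-valued square-integrable random variable with E[ς²] > 0, let α > 0 and β_λ > 0. Then E[( E[ς²]^α E[ς] ς / (E[ς²]^{α+1} + β_λ) − 1 )²] ≤ Var(ς)/E[ς²] + β_λ² / (E[ς²]^{α+1} + β_λ)². -/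
/-!
Expanding the square, the left-hand side is the quadratic `c² s − 2 c m + 1` in the gain
`c = s^α m / (s^{α+1} + β_λ)`, where `m = E[ς]` and `s = E[ς²]`. Completing the square,
`c² s − 2 c m + 1 = (s − m²)/s + s (c − m/s)²`, and since `s^{α+1} = s^α s` the square term equals
`(m²/s) · β_λ² / (s^{α+1} + β_λ)²`, which is at most `β_λ² / (s^{α+1} + β_λ)²` because `m² ≤ s`.
-/

open MeasureTheory ProbabilityTheory

section

variable {Ω : Type*} {_ : MeasurableSpace Ω} {μ : Measure Ω} [IsProbabilityMeasure μ]
  {X : Ω → ℝ}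

theorem sq_integral_le_integral_sq (hX : MemLp X 2 μ) :
    (∫ ω, X ω ∂μ) ^ 2 ≤ ∫ ω, X ω ^ 2 ∂μ := by
  have h := variance_nonneg X μ
  rw [variance_eq_sub hX] at h
  simpa only [Pi.pow_apply, sub_nonneg] using h

theorem integral_sq_mul_sub (hX : MemLp X 2 μ) (a b : ℝ) :
    ∫ ω, (a * X ω - b) ^ 2 ∂μ
      = a ^ 2 * ∫ ω, X ω ^ 2 ∂μ - 2 * a * b * ∫ ω, X ω ∂μ + b ^ 2 := by
  have hX1 : Integrable X μ := hX.integrable one_le_two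
  have hX2 : Integrable (fun ω => X ω ^ 2) μ := hX.integrable_sq
  have hexpand : ∀ ω, (a * X ω - b) ^ 2 = a ^ 2 * X ω ^ 2 - 2 * a * b * X ω + b ^ 2 := by
    intro ω; ring
  have hint : Integrable (fun ω => a ^ 2 * X ω ^ 2 - 2 * a * b * X ω) μ :=
    (hX2.const_mul _).sub (hX1.const_mul _)
  simp_rw [hexpand]
  rw [integral_add hint (integrable_const _),
    integral_sub (hX2.const_mul _) (hX1.const_mul _), integral_const_mul, integral_const_mul,
    integral_const, probReal_univ, one_smul]

end

theorem sq_regularized_gain_mul_sub_add_one_le {s m A β : ℝ} (hs : 0 < s)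
    (hD : A * s + β ≠ 0) (hm : m ^ 2 ≤ s) :
    (A * m / (A * s + β)) ^ 2 * s - 2 * (A * m / (A * s + β)) * m + 1
      ≤ (s - m ^ 2) / s + β ^ 2 / (A * s + β) ^ 2 := by
  have hsplit : (A * m / (A * s + β)) ^ 2 * s - 2 * (A * m / (A * s + β)) * m + 1
      = (s - m ^ 2) / s + m ^ 2 / s * (β ^ 2 / (A * s + β) ^ 2) := by
    field_simp
    ring
  rw [hsplit]
  gcongr
  exact mul_le_of_le_one_left (by positivity) ((div_le_one hs).2 hm)

theorem singular_value_entry_bound_general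
    {Ω : Type*} [MeasureSpace Ω] [IsProbabilityMeasure (ℙ : Measure Ω)]
    (ς : Ω → ℝ)
    (h2 : MemLp ς 2 ℙ) (hE2 : 0 < ∫ ω, ς ω ^ 2)
    (α βlam : ℝ) (hβlam : 0 < βlam) :
    ∫ ω, ((∫ ω', ς ω' ^ 2) ^ α * (∫ ω', ς ω') * ς ω
            / ((∫ ω', ς ω' ^ 2) ^ (α + 1) + βlam) - 1) ^ 2
      ≤ ((∫ ω, ς ω ^ 2) - (∫ ω, ς ω) ^ 2) / (∫ ω, ς ω ^ 2)
        + βlam ^ 2 / ((∫ ω, ς ω ^ 2) ^ (α + 1) + βlam) ^ 2 := by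
  set s := ∫ ω, ς ω ^ 2
  set m := ∫ ω, ς ω
  have hpow : s ^ (α + 1) = s ^ α * s := by rw [Real.rpow_add hE2, Real.rpow_one]
  have hD : 0 < s ^ α * s + βlam := add_pos (mul_pos (Real.rpow_pos_of_pos hE2 α) hE2) hβlam
  have hgain : ∀ ω, s ^ α * m * ς ω / (s ^ (α + 1) + βlam) - 1
      = s ^ α * m / (s ^ α * s + βlam) * ς ω - 1 := by
    intro ω
    rw [hpow, mul_div_right_comm]
  simp_rw [hgain, integral_sq_mul_sub h2, hpow, one_pow, mul_one]
  exact sq_regularized_gain_mul_sub_add_one_le hE2 hD.ne' (sq_integral_le_integral_sq h2)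

/-- For a nonnegative square-integrable random variable `ς` with `E[ς²] > 0`,
`α > 0` and `β_λ > 0`,
`E[( E[ς²]^α E[ς] ς / (E[ς²]^{α+1} + β_λ) − 1 )²] ≤ Var(ς)/E[ς²] + β_λ²/(E[ς²]^{α+1} + β_λ)²`,
where `Var(ς) = E[ς²] − E[ς]²`. -/
theorem singular_value_entry_bound
    {Ω : Type*} [MeasureSpace Ω] [IsProbabilityMeasure (ℙ : Measure Ω)]
    (ς : Ω → ℝ) (hmeas : Measurable ς) (hnonneg : ∀ ω, 0 ≤ ς ω)
    (h2 : MemLp ς 2 ℙ) (hE2 : 0 < ∫ ω, ς ω ^ 2)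
    (α βlam : ℝ) (hα : 0 < α) (hβlam : 0 < βlam) :
    ∫ ω, ((∫ ω', ς ω' ^ 2) ^ α * (∫ ω', ς ω') * ς ω
            / ((∫ ω', ς ω' ^ 2) ^ (α + 1) + βlam) - 1) ^ 2
      ≤ ((∫ ω, ς ω ^ 2) - (∫ ω, ς ω) ^ 2) / (∫ ω, ς ω ^ 2)
        + βlam ^ 2 / ((∫ ω, ς ω ^ 2) ^ (α + 1) + βlam) ^ 2 :=
  singular_value_entry_bound_general ς h2 hE2 α βlam hβlam
end
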